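/- arXiv:math/0012226 — 4 statements merged into one kernel-verified Lean document; each statement's English description precedes it below -/
import Mathlib

section
/- Let ρ ∈ M_n(ℂ) satisfy ρ = ρ*, ρ² = ρ and Tr(ρ) = 1, let H ∈ M_n(ℂ) be Hermitian and let L_1,…,L_m ∈ M_n(ℂ). Define B_j(ρ) = L_jρ + ρL_j* − Tr((L_j+L_j*)ρ)·ρ and A(ρ) = −i[H,ρ] + Σ_{j=1}^m { Tr((L_j+L_j*)ρ)·B_j(ρ) − ½[(L_j+L_j*)L_jρ − Tr((L_j+L_j*)L_jρ)·ρ] − ½[ρL_j*(L_j+L_j*) − Tr((L_j+L_j*)ρL_j*)·ρ] }. Then A(ρ) is Hermitian and satisfies ρA(ρ) + A(ρ)ρ = A(ρ); in particular Tr(A(ρ)) = 0. -/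
open Matrix

/-- The diffusion vector field `B_j(ρ) = L_jρ + ρL_j* − Tr((L_j+L_j*)ρ)ρ` of eq. (4.3). -/
noncomputable def diffusionField {n : ℕ} (L ρ : Matrix (Fin n) (Fin n) ℂ) :
    Matrix (Fin n) (Fin n) ℂ :=
  L * ρ + ρ * Lᴴ - ((L + Lᴴ) * ρ).trace • ρ

/-- The Stratonovich drift vector field `A(ρ)` of eq. (4.2). -/
noncomputable def driftField {n m : ℕ} (H : Matrix (Fin n) (Fin n) ℂ)
    (L : Fin m → Matrix (Fin n) (Fin n) ℂ) (ρ : Matrix (Fin n) (Fin n) ℂ) :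
    Matrix (Fin n) (Fin n) ℂ :=
  (-Complex.I) • (H * ρ - ρ * H) +
    ∑ j, (((L j + (L j)ᴴ) * ρ).trace • diffusionField (L j) ρ
      - (2⁻¹ : ℂ) • ((L j + (L j)ᴴ) * L j * ρ - ((L j + (L j)ᴴ) * L j * ρ).trace • ρ)
      - (2⁻¹ : ℂ) • (ρ * (L j)ᴴ * (L j + (L j)ᴴ)
          - ((L j + (L j)ᴴ) * ρ * (L j)ᴴ).trace • ρ))

/-!
A pure state `ρ` is a rank-one projection: if `ρₖₖ ≠ 0` then `ρ = ρₖₖ⁻¹ • ρ Eₖₖ ρ`, since the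
difference is a Hermitian projection of trace zero. Hence `ρ X ρ = Tr(X ρ) • ρ` for every `X`,
so `Y ρ - Tr(Y ρ) • ρ`, `ρ Y - Tr(Y ρ) • ρ` and `Y ρ - ρ Y` all satisfy `ρ τ + τ ρ = τ`, and
`A(ρ)` is a complex linear combination of such matrices. It is Hermitian because the two
Itô-correction terms of each summand are adjoint to each other and the coefficients
`Tr((L + L*) ρ)` are real. Finally, multiplying `ρ τ + τ ρ = τ` by `ρ` gives `ρ τ ρ = 0`, so
`Tr(τ ρ) = 0` and `Tr τ = 2 Tr(τ ρ) = 0`.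
-/

namespace Matrix

variable {ι : Type*} [Fintype ι]

section CommRing

variable {R : Type*} [CommRing R]

theorem single_one_mul_mul_single_one [DecidableEq ι] (k : ι) (Y : Matrix ι ι R) :
    single k k (1 : R) * Y * single k k 1 = Y k k • single k k 1 := by
  rw [single_mul_mul_single, one_mul, mul_one, smul_single, smul_eq_mul, mul_one]

theorem mul_mul_eq_smul_of_eq_smul_mul_single_mul [DecidableEq ι] {ρ : Matrix ι ι R} {a : R}
    {k : ι} (hρ : ρ = a • (ρ * single k k 1 * ρ)) (X : Matrix ι ι R) :
    ρ * X * ρ = (a * (ρ * X * ρ) k k) • ρ := by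
  calc ρ * X * ρ
      = (a * a) • (ρ * (single k k 1 * (ρ * X * ρ) * single k k 1) * ρ) := by
        conv_lhs => rw [hρ]
        simp only [Matrix.smul_mul, Matrix.mul_smul, smul_smul, Matrix.mul_assoc]
    _ = (a * (ρ * X * ρ) k k) • (a • (ρ * single k k 1 * ρ)) := by
        rw [single_one_mul_mul_single_one, Matrix.mul_smul, Matrix.smul_mul, smul_smul, smul_smul,
          mul_right_comm]
    _ = (a * (ρ * X * ρ) k k) • ρ := by rw [← hρ]

/-- The complexification of the tangent space `T_ρ = {τ = τ* | ρτ + τρ = τ}`: `T_ρ` is its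
Hermitian part. -/
def tangentSubmodule (ρ : Matrix ι ι R) : Submodule R (Matrix ι ι R) where
  carrier := {X | ρ * X + X * ρ = X}
  add_mem' {X Y} hX hY := by
    simp only [Set.mem_ofPred_eq, Matrix.mul_add, Matrix.add_mul] at *
    rw [add_add_add_comm, hX, hY]
  zero_mem' := by simp
  smul_mem' c X hX := by
    simp only [Set.mem_ofPred_eq, Matrix.mul_smul, Matrix.smul_mul] at *
    rw [← smul_add, hX]

theorem mem_tangentSubmodule {ρ X : Matrix ι ι R} :
    X ∈ tangentSubmodule ρ ↔ ρ * X + X * ρ = X := Iff.rfl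

section Idempotent

variable {ρ : Matrix ι ι R} (hρ : IsIdempotentElem ρ)
include hρ

theorem trace_mul_mul_of_isIdempotentElem (X : Matrix ι ι R) :
    (ρ * X * ρ).trace = (X * ρ).trace := by
  rw [trace_mul_cycle, hρ.eq, trace_mul_comm]

theorem mul_sub_mul_mem_tangentSubmodule_of_isIdempotentElem (Y : Matrix ι ι R) :
    Y * ρ - ρ * Y ∈ tangentSubmodule ρ := by
  rw [mem_tangentSubmodule, Matrix.mul_sub, Matrix.sub_mul, ← Matrix.mul_assoc,
    Matrix.mul_assoc Y, hρ.eq, ← Matrix.mul_assoc ρ ρ, hρ.eq]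
  abel

theorem trace_eq_zero_of_mem_tangentSubmodule_of_isIdempotentElem {X : Matrix ι ι R}
    (hX : X ∈ tangentSubmodule ρ) : X.trace = 0 := by
  have hsandwich : ρ * X * ρ = 0 := by
    have h := congrArg (ρ * ·) (mem_tangentSubmodule.mp hX)
    simp only [Matrix.mul_add, ← Matrix.mul_assoc, hρ.eq] at h
    simpa using h
  have htrace : (X * ρ).trace = 0 := by
    rw [← trace_mul_mul_of_isIdempotentElem hρ, hsandwich, trace_zero]
  rw [← mem_tangentSubmodule.mp hX, trace_add, trace_mul_comm, htrace, add_zero]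

end Idempotent

end CommRing

theorem IsHermitian.isSelfAdjoint_trace_mul {R : Type*} [CommRing R] [StarRing R]
    {A B : Matrix ι ι R} (hA : A.IsHermitian) (hB : B.IsHermitian) :
    IsSelfAdjoint (A * B).trace := by
  rw [IsSelfAdjoint, ← trace_conjTranspose, conjTranspose_mul, hA.eq, hB.eq, trace_mul_comm]

theorem IsHermitian.neg_I_smul_mul_sub_mul {A B : Matrix ι ι ℂ} (hA : A.IsHermitian)
    (hB : B.IsHermitian) : ((-Complex.I) • (A * B - B * A)).IsHermitian := by
  rw [IsHermitian, conjTranspose_smul, conjTranspose_sub, conjTranspose_mul, conjTranspose_mul,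
    hA.eq, hB.eq, star_neg, Complex.star_def, Complex.conj_I, neg_smul, ← smul_neg, neg_sub,
    neg_smul]

theorem IsHermitian.eq_zero_of_isIdempotentElem_of_trace_eq_zero {R : Type*} [PartialOrder R]
    [Ring R] [StarRing R] [StarOrderedRing R] [NoZeroDivisors R] {P : Matrix ι ι R}
    (hP : P.IsHermitian) (hP' : IsIdempotentElem P) (htrace : P.trace = 0) : P = 0 := by
  rw [← trace_conjTranspose_mul_self_eq_zero_iff, hP.eq, hP'.eq, htrace]

section PureState

variable {K : Type*} [Field K] [StarRing K]

structure IsPureState (ρ : Matrix ι ι K) : Prop where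
  isHermitian : ρ.IsHermitian
  isIdempotentElem : IsIdempotentElem ρ
  trace_eq_one : ρ.trace = 1

namespace IsPureState

variable [PartialOrder K] [StarOrderedRing K] {ρ : Matrix ι ι K} (hρ : IsPureState ρ)
include hρ

theorem eq_smul_mul_single_mul [DecidableEq ι] {k : ι} (hk : ρ k k ≠ 0) :
    ρ = (ρ k k)⁻¹ • (ρ * single k k 1 * ρ) := by
  set c := ρ k k
  set W := ρ * single k k 1 * ρ
  have hρρ : ρ * ρ = ρ := hρ.isIdempotentElem.eq
  have hc : IsSelfAdjoint c := hρ.isHermitian.apply k k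
  have hρW : ρ * W = W := by simp only [W, ← Matrix.mul_assoc, hρρ]
  have hWρ : W * ρ = W := by simp only [W, Matrix.mul_assoc, hρρ]
  have hWW : W * W = c • W := by
    calc W * W = ρ * (single k k 1 * (ρ * ρ) * single k k 1) * ρ := by
          simp only [W, Matrix.mul_assoc]
      _ = c • W := by
          rw [hρρ, single_one_mul_mul_single_one, Matrix.mul_smul, Matrix.smul_mul]
  have hW : W.IsHermitian := by
    simp only [IsHermitian, W, conjTranspose_mul, hρ.isHermitian.eq, conjTranspose_single,
      star_one, Matrix.mul_assoc]
  have htraceW : W.trace = c := by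
    rw [trace_mul_cycle, hρρ, trace_mul_comm, trace_single_mul, one_smul]
  have hzero : ρ - c⁻¹ • W = 0 := by
    refine IsHermitian.eq_zero_of_isIdempotentElem_of_trace_eq_zero
      (hρ.isHermitian.sub (hW.smul hc.inv₀)) ?_ ?_
    · rw [IsIdempotentElem, Matrix.sub_mul, Matrix.mul_sub, Matrix.mul_sub, hρρ, Matrix.mul_smul,
        hρW, Matrix.smul_mul, hWρ, Matrix.smul_mul, Matrix.mul_smul, hWW, smul_smul c⁻¹ c,
        inv_mul_cancel₀ hk, one_smul]
      abel
    · rw [trace_sub, trace_smul, htraceW, hρ.trace_eq_one, smul_eq_mul, inv_mul_cancel₀ hk,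
        sub_self]
  exact sub_eq_zero.mp hzero

theorem mul_mul_eq_trace_smul (X : Matrix ι ι K) : ρ * X * ρ = (X * ρ).trace • ρ := by
  classical
  obtain ⟨k, -, hk⟩ : ∃ k ∈ Finset.univ, ρ k k ≠ 0 :=
    Finset.exists_ne_zero_of_sum_ne_zero (show ρ.trace ≠ 0 from hρ.trace_eq_one ▸ one_ne_zero)
  have hsmul := mul_mul_eq_smul_of_eq_smul_mul_single_mul (hρ.eq_smul_mul_single_mul hk) X
  rw [← trace_mul_mul_of_isIdempotentElem hρ.isIdempotentElem, hsmul, trace_smul,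
    hρ.trace_eq_one, smul_eq_mul, mul_one]

theorem mul_self_sub_trace_smul_mem_tangentSubmodule (Y : Matrix ι ι K) :
    Y * ρ - (Y * ρ).trace • ρ ∈ tangentSubmodule ρ := by
  rw [mem_tangentSubmodule, Matrix.mul_sub, Matrix.sub_mul, Matrix.mul_smul, Matrix.smul_mul,
    hρ.isIdempotentElem.eq, ← Matrix.mul_assoc, hρ.mul_mul_eq_trace_smul, Matrix.mul_assoc,
    hρ.isIdempotentElem.eq]
  abel

theorem self_mul_sub_trace_smul_mem_tangentSubmodule (Y : Matrix ι ι K) :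
    ρ * Y - (Y * ρ).trace • ρ ∈ tangentSubmodule ρ := by
  rw [mem_tangentSubmodule, Matrix.mul_sub, Matrix.sub_mul, Matrix.mul_smul, Matrix.smul_mul,
    hρ.isIdempotentElem.eq, ← Matrix.mul_assoc, hρ.isIdempotentElem.eq,
    hρ.mul_mul_eq_trace_smul]
  abel

end IsPureState

end PureState

end Matrix

open scoped ComplexOrder

section DriftField

variable {n : ℕ}

theorem diffusionField_eq_add (L ρ : Matrix (Fin n) (Fin n) ℂ) :
    diffusionField L ρ = (L * ρ - (L * ρ).trace • ρ) + (ρ * Lᴴ - (Lᴴ * ρ).trace • ρ) := by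
  rw [diffusionField, Matrix.add_mul, trace_add, add_smul]
  abel

theorem diffusionField_isHermitian {ρ : Matrix (Fin n) (Fin n) ℂ} (hρ : ρ.IsHermitian)
    (L : Matrix (Fin n) (Fin n) ℂ) : (diffusionField L ρ).IsHermitian := by
  have hsum : diffusionField L ρ = L * ρ + (L * ρ)ᴴ - ((L + Lᴴ) * ρ).trace • ρ := by
    rw [conjTranspose_mul, hρ.eq, diffusionField]
  rw [hsum]
  exact (isHermitian_add_transpose_self _).sub
    (hρ.smul ((isHermitian_add_transpose_self L).isSelfAdjoint_trace_mul hρ))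

noncomputable def driftTerm (L ρ : Matrix (Fin n) (Fin n) ℂ) : Matrix (Fin n) (Fin n) ℂ :=
  ((L + Lᴴ) * ρ).trace • diffusionField L ρ
    - (2⁻¹ : ℂ) • ((L + Lᴴ) * L * ρ - ((L + Lᴴ) * L * ρ).trace • ρ)
    - (2⁻¹ : ℂ) • (ρ * Lᴴ * (L + Lᴴ) - ((L + Lᴴ) * ρ * Lᴴ).trace • ρ)

theorem driftField_eq_add_sum {m : ℕ} (H : Matrix (Fin n) (Fin n) ℂ)
    (L : Fin m → Matrix (Fin n) (Fin n) ℂ) (ρ : Matrix (Fin n) (Fin n) ℂ) :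
    driftField H L ρ = (-Complex.I) • (H * ρ - ρ * H) + ∑ j, driftTerm (L j) ρ := rfl

theorem driftTerm_isHermitian {ρ : Matrix (Fin n) (Fin n) ℂ} (hρ : ρ.IsHermitian)
    (L : Matrix (Fin n) (Fin n) ℂ) : (driftTerm L ρ).IsHermitian := by
  set K := L + Lᴴ
  have hK : K.IsHermitian := isHermitian_add_transpose_self L
  set M := K * L * ρ - (K * L * ρ).trace • ρ
  have hM : Mᴴ = ρ * Lᴴ * K - (K * ρ * Lᴴ).trace • ρ := by
    rw [conjTranspose_sub, conjTranspose_smul, ← trace_conjTranspose, conjTranspose_mul,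
      conjTranspose_mul, hρ.eq, hK.eq, ← Matrix.mul_assoc, trace_mul_cycle]
  have hsum :
      driftTerm L ρ = (K * ρ).trace • diffusionField L ρ - (2⁻¹ : ℂ) • (M + Mᴴ) := by
    rw [hM, smul_add, ← sub_sub]
    rfl
  rw [hsum]
  exact ((diffusionField_isHermitian hρ L).smul (hK.isSelfAdjoint_trace_mul hρ)).sub
    ((isHermitian_add_transpose_self M).smul (by simp [IsSelfAdjoint]))

theorem driftField_isHermitian {m : ℕ} {ρ H : Matrix (Fin n) (Fin n) ℂ} (hρ : ρ.IsHermitian)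
    (hH : H.IsHermitian) (L : Fin m → Matrix (Fin n) (Fin n) ℂ) :
    (driftField H L ρ).IsHermitian := by
  rw [driftField_eq_add_sum]
  exact (hH.neg_I_smul_mul_sub_mul hρ).add
    (isSelfAdjoint_sum _ fun j _ => (driftTerm_isHermitian hρ (L j)).isSelfAdjoint).isHermitian

namespace Matrix.IsPureState

variable {ρ : Matrix (Fin n) (Fin n) ℂ} (hρ : ρ.IsPureState)
include hρ

theorem diffusionField_mem_tangentSubmodule (L : Matrix (Fin n) (Fin n) ℂ) :
    diffusionField L ρ ∈ tangentSubmodule ρ := by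
  rw [diffusionField_eq_add]
  exact add_mem (hρ.mul_self_sub_trace_smul_mem_tangentSubmodule L)
    (hρ.self_mul_sub_trace_smul_mem_tangentSubmodule Lᴴ)

theorem driftTerm_mem_tangentSubmodule (L : Matrix (Fin n) (Fin n) ℂ) :
    driftTerm L ρ ∈ tangentSubmodule ρ := by
  have hcycle : ρ * Lᴴ * (L + Lᴴ) - ((L + Lᴴ) * ρ * Lᴴ).trace • ρ
      = ρ * (Lᴴ * (L + Lᴴ)) - (Lᴴ * (L + Lᴴ) * ρ).trace • ρ := by
    rw [Matrix.mul_assoc, trace_mul_cycle]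
  rw [driftTerm, hcycle]
  exact sub_mem (sub_mem
    (Submodule.smul_mem _ _ (hρ.diffusionField_mem_tangentSubmodule L))
    (Submodule.smul_mem _ _ (hρ.mul_self_sub_trace_smul_mem_tangentSubmodule _)))
    (Submodule.smul_mem _ _ (hρ.self_mul_sub_trace_smul_mem_tangentSubmodule _))

theorem driftField_mem_tangentSubmodule {m : ℕ} (H : Matrix (Fin n) (Fin n) ℂ)
    (L : Fin m → Matrix (Fin n) (Fin n) ℂ) : driftField H L ρ ∈ tangentSubmodule ρ := by
  rw [driftField_eq_add_sum]
  exact add_mem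
    (Submodule.smul_mem _ _ (mul_sub_mul_mem_tangentSubmodule_of_isIdempotentElem
      hρ.isIdempotentElem H))
    (Submodule.sum_mem _ fun j _ => hρ.driftTerm_mem_tangentSubmodule (L j))

end Matrix.IsPureState

end DriftField

/-- At a pure state `ρ`, the Stratonovich drift `A(ρ)` of eq. (4.2) is Hermitian and
tangent to the manifold of pure states (`ρA + Aρ = A`); in particular its trace is zero. -/
theorem driftField_tangent {n m : ℕ} (ρ : Matrix (Fin n) (Fin n) ℂ)
    (h1 : ρᴴ = ρ) (h2 : ρ ^ 2 = ρ) (h3 : ρ.trace = 1)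
    (H : Matrix (Fin n) (Fin n) ℂ) (hH : Hᴴ = H)
    (L : Fin m → Matrix (Fin n) (Fin n) ℂ) :
    (driftField H L ρ)ᴴ = driftField H L ρ ∧
      ρ * driftField H L ρ + driftField H L ρ * ρ = driftField H L ρ ∧
      (driftField H L ρ).trace = 0 := by
  have hρ : ρ.IsPureState := ⟨h1, (sq ρ).symm.trans h2, h3⟩
  have htangent := hρ.driftField_mem_tangentSubmodule H L
  exact ⟨driftField_isHermitian h1 hH L, htangent,
    trace_eq_zero_of_mem_tangentSubmodule_of_isIdempotentElem hρ.isIdempotentElem htangent⟩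
end

section
/- Let H ∈ M_n(ℂ) be Hermitian and L_1,…,L_m ∈ M_n(ℂ). For ρ ∈ M_n(ℂ) set c_j(ρ) = Tr((L_j+L_j*)ρ), B_j(ρ) = L_jρ + ρL_j* − c_j(ρ)ρ, and A(ρ) = −i[H,ρ] + Σ_{j=1}^m { c_j(ρ)B_j(ρ) − ½[(L_j+L_j*)L_jρ − Tr((L_j+L_j*)L_jρ)·ρ] − ½[ρL_j*(L_j+L_j*) − Tr((L_j+L_j*)ρL_j*)·ρ] }. Then for every ρ ∈ M_n(ℂ): −i[H,ρ] + Σ_{j=1}^m ( L_jρL_j* − ½(ρL_j*L_j + L_j*L_jρ) ) = A(ρ) + ½ Σ_{j=1}^m ( L_jB_j(ρ) + B_j(ρ)L_j* − c_j(B_j(ρ))·ρ − c_j(ρ)·B_j(ρ) ). -/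
open Matrix

/-- The per-`j` algebraic identity behind the Itô–Stratonovich correspondence. -/
lemma ito_stratonovich_key {n : ℕ} (L ρ : Matrix (Fin n) (Fin n) ℂ) :
    L * ρ * Lᴴ - (2⁻¹ : ℂ) • (ρ * (Lᴴ * L) + (Lᴴ * L) * ρ) =
    (((L + Lᴴ) * ρ).trace • diffusionField L ρ
      - (2⁻¹ : ℂ) • ((L + Lᴴ) * L * ρ - ((L + Lᴴ) * L * ρ).trace • ρ)
      - (2⁻¹ : ℂ) • (ρ * Lᴴ * (L + Lᴴ) - ((L + Lᴴ) * ρ * Lᴴ).trace • ρ))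
    + (2⁻¹ : ℂ) • (L * diffusionField L ρ + diffusionField L ρ * Lᴴ
        - ((L + Lᴴ) * diffusionField L ρ).trace • ρ
        - ((L + Lᴴ) * ρ).trace • diffusionField L ρ) := by
  simp only [diffusionField, mul_add, add_mul, mul_sub, sub_mul, smul_sub, smul_add,
    Matrix.mul_smul, Matrix.smul_mul, trace_add, trace_sub, trace_smul, smul_smul,
    trace_mul_cycle, mul_assoc, smul_eq_mul]
  module

/-- Itô–Stratonovich correspondence: the Lindblad drift `−i[H,ρ] + Σ_j (L_jρL_j* −
½(ρL_j*L_j + L_j*L_jρ))` of the Itô equation (3.3) equals the Stratonovich drift `A(ρ)`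
of eq. (4.2) plus the correction `½ Σ_j DB_j(ρ)[B_j(ρ)]`. -/
theorem ito_stratonovich_drift_identity {n m : ℕ}
    (H : Matrix (Fin n) (Fin n) ℂ) (hH : Hᴴ = H)
    (L : Fin m → Matrix (Fin n) (Fin n) ℂ) (ρ : Matrix (Fin n) (Fin n) ℂ) :
    (-Complex.I) • (H * ρ - ρ * H) +
      ∑ j, (L j * ρ * (L j)ᴴ
        - (2⁻¹ : ℂ) • (ρ * ((L j)ᴴ * L j) + ((L j)ᴴ * L j) * ρ)) =
    driftField H L ρ +
      (2⁻¹ : ℂ) • ∑ j, (L j * diffusionField (L j) ρ + diffusionField (L j) ρ * (L j)ᴴ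
        - ((L j + (L j)ᴴ) * diffusionField (L j) ρ).trace • ρ
        - ((L j + (L j)ᴴ) * ρ).trace • diffusionField (L j) ρ) := by
  rw [driftField, add_assoc, Finset.smul_sum, ← Finset.sum_add_distrib]
  congr 1
  exact Finset.sum_congr rfl fun j _ => ito_stratonovich_key (L j) ρ
end

section
/- Let L_1,…,L_m ∈ M_n(ℂ), let ψ ∈ ℂⁿ be a unit vector and ρ = |ψ⟩⟨ψ|, and set B_j(ρ) = L_jρ + ρL_j* − Tr((L_j+L_j*)ρ)·ρ. Then the following are equivalent: (i) for every nonzero Hermitian τ ∈ M_n(ℂ) with ρτ + τρ = τ there exists j ∈ {1,…,m} with Tr(τ·B_j(ρ)) ≠ 0; (ii) for every nonzero φ ∈ ℂⁿ with ⟨φ, ψ⟩ = 0 there exists j ∈ {1,…,m} with Re⟨φ, L_jψ⟩ ≠ 0. -/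
open Matrix

section helpers

variable {n : ℕ}

lemma vmv_mul_vmv (a b c d : Fin n → ℂ) :
    vecMulVec a b * vecMulVec c d = (b ⬝ᵥ c) • vecMulVec a d := by
  ext i j
  simp only [Matrix.mul_apply, vecMulVec_apply, Matrix.smul_apply, dotProduct,
    Finset.sum_mul, smul_eq_mul]
  apply Finset.sum_congr rfl
  intro k _
  ring

lemma mul_vmv (M : Matrix (Fin n) (Fin n) ℂ) (a b : Fin n → ℂ) :
    M * vecMulVec a b = vecMulVec (M *ᵥ a) b := by
  ext i j
  simp only [Matrix.mul_apply, vecMulVec_apply, mulVec, dotProduct, Finset.sum_mul]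
  apply Finset.sum_congr rfl
  intro k _
  ring

lemma vmv_mul (M : Matrix (Fin n) (Fin n) ℂ) (a b : Fin n → ℂ) :
    vecMulVec a b * M = vecMulVec a (b ᵥ* M) := by
  ext i j
  simp only [Matrix.mul_apply, vecMulVec_apply, vecMul, dotProduct, Finset.mul_sum]
  apply Finset.sum_congr rfl
  intro k _
  ring

lemma trace_vmv (a b : Fin n → ℂ) : (vecMulVec a b).trace = b ⬝ᵥ a := by
  simp only [Matrix.trace, Matrix.diag, vecMulVec_apply, dotProduct]
  apply Finset.sum_congr rfl
  intro k _
  ring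

lemma vmv_conjTranspose (a b : Fin n → ℂ) :
    (vecMulVec a b)ᴴ = vecMulVec (star b) (star a) := by
  ext i j
  simp [vecMulVec_apply, conjTranspose_apply, mul_comm]

lemma vmv_mulVec (a b v : Fin n → ℂ) :
    vecMulVec a b *ᵥ v = (b ⬝ᵥ v) • a := by
  ext i
  simp only [mulVec, dotProduct, vecMulVec_apply, Pi.smul_apply, smul_eq_mul,
    Finset.sum_mul]
  apply Finset.sum_congr rfl
  intro k _
  ring

/-- Key trace computation: for `τ = |φ⟩⟨ψ| + |ψ⟩⟨φ|` with `φ ⊥ ψ`,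
`Tr(τ B(ρ)) = ⟨φ,Lψ⟩ + conj ⟨φ,Lψ⟩`. -/
lemma trace_key (Lm : Matrix (Fin n) (Fin n) ℂ) (ψ φ : Fin n → ℂ)
    (hψ : star ψ ⬝ᵥ ψ = 1) (hφ : star φ ⬝ᵥ ψ = 0) :
    ((vecMulVec φ (star ψ) + vecMulVec ψ (star φ)) *
        diffusionField Lm (vecMulVec ψ (star ψ))).trace =
      star φ ⬝ᵥ Lm *ᵥ ψ + star (star φ ⬝ᵥ Lm *ᵥ ψ) := by
  have hψφ : star ψ ⬝ᵥ φ = 0 := by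
    rw [star_dotProduct, hφ, star_zero]
  have hρL : vecMulVec ψ (star ψ) * Lmᴴ = vecMulVec ψ (star (Lm *ᵥ ψ)) := by
    rw [vmv_mul, star_mulVec]
  have hLρ : Lm * vecMulVec ψ (star ψ) = vecMulVec (Lm *ᵥ ψ) (star ψ) :=
    mul_vmv _ _ _
  unfold diffusionField
  rw [hρL, hLρ]
  simp only [mul_sub, mul_add, add_mul, Matrix.mul_smul, Matrix.smul_mul,
    vmv_mul_vmv, trace_sub, trace_add, trace_smul, trace_vmv, smul_eq_mul]
  have h1 : star (Lm *ᵥ ψ) ⬝ᵥ φ = star (star φ ⬝ᵥ Lm *ᵥ ψ) := by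
    rw [star_dotProduct]
  rw [hψ, hψφ, hφ, h1]
  ring

end helpers

/-- Ellipticity criterion (4.5): at the pure state `ρ = |ψ⟩⟨ψ|`, no nonzero tangent
vector `τ` is orthogonal to all the fields `B_j(ρ)` iff for every nonzero `φ ⊥ ψ`
there is a `j` with `Re⟨φ, L_jψ⟩ ≠ 0`. -/
theorem ellipticity_criterion {n m : ℕ} (L : Fin m → Matrix (Fin n) (Fin n) ℂ)
    (ψ : Fin n → ℂ) (hψ : star ψ ⬝ᵥ ψ = 1) :
    (∀ τ : Matrix (Fin n) (Fin n) ℂ, τ ≠ 0 → τᴴ = τ →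
        vecMulVec ψ (star ψ) * τ + τ * vecMulVec ψ (star ψ) = τ →
        ∃ j, (τ * diffusionField (L j) (vecMulVec ψ (star ψ))).trace ≠ 0) ↔
      (∀ φ : Fin n → ℂ, φ ≠ 0 → star φ ⬝ᵥ ψ = 0 →
        ∃ j, (star φ ⬝ᵥ (L j) *ᵥ ψ).re ≠ 0) := by
  have hψ0 : ψ ≠ 0 := by
    intro h
    rw [h] at hψ
    simp at hψ
  have key : ∀ (Lm : Matrix (Fin n) (Fin n) ℂ) (φ : Fin n → ℂ), star φ ⬝ᵥ ψ = 0 →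
      ((vecMulVec φ (star ψ) + vecMulVec ψ (star φ)) *
          diffusionField Lm (vecMulVec ψ (star ψ))).trace =
        star φ ⬝ᵥ Lm *ᵥ ψ + star (star φ ⬝ᵥ Lm *ᵥ ψ) :=
    fun Lm φ hφ => trace_key Lm ψ φ hψ hφ
  constructor
  · -- (i) → (ii)
    intro H φ hφ0 hφψ
    have hψφ : star ψ ⬝ᵥ φ = 0 := by rw [star_dotProduct, hφψ, star_zero]
    set τ := vecMulVec φ (star ψ) + vecMulVec ψ (star φ) with hτ
    have hτψ : τ *ᵥ ψ = φ := by
      rw [hτ, add_mulVec, vmv_mulVec, vmv_mulVec, hψ, hφψ]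
      simp
    have hτ0 : τ ≠ 0 := by
      intro h
      apply hφ0
      rw [← hτψ, h, zero_mulVec]
    have hτH : τᴴ = τ := by
      rw [hτ, conjTranspose_add, vmv_conjTranspose, vmv_conjTranspose,
        star_star, star_star, add_comm]
    have hτtan : vecMulVec ψ (star ψ) * τ + τ * vecMulVec ψ (star ψ) = τ := by
      rw [hτ, mul_add, add_mul, vmv_mul_vmv, vmv_mul_vmv, vmv_mul_vmv,
        vmv_mul_vmv, hψ, hψφ, hφψ]
      simp [add_comm]
    obtain ⟨j, hj⟩ := H τ hτ0 hτH hτtan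
    refine ⟨j, ?_⟩
    intro hre
    apply hj
    rw [key (L j) φ hφψ]
    have : (star φ ⬝ᵥ L j *ᵥ ψ + star (star φ ⬝ᵥ L j *ᵥ ψ)).re =
        2 * (star φ ⬝ᵥ L j *ᵥ ψ).re := by
      simp [Complex.add_re]; ring
    have him : (star φ ⬝ᵥ L j *ᵥ ψ + star (star φ ⬝ᵥ L j *ᵥ ψ)).im = 0 := by
      simp [Complex.add_im]
    apply Complex.ext
    · rw [this, hre]; simp
    · rw [him]; simp
  · -- (ii) → (i)
    intro H τ hτ0 hτH hτtan
    set φ := τ *ᵥ ψ with hφdef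
    have hρτ : vecMulVec ψ (star ψ) * τ = vecMulVec ψ (star φ) := by
      rw [vmv_mul, hφdef, star_mulVec, hτH]
    have hτρ : τ * vecMulVec ψ (star ψ) = vecMulVec φ (star ψ) := by
      rw [mul_vmv]
    have hτeq : τ = vecMulVec φ (star ψ) + vecMulVec ψ (star φ) := by
      rw [← hτtan, hρτ, hτρ, add_comm]
    have hφψ : star φ ⬝ᵥ ψ = 0 := by
      have h1 : τ *ᵥ ψ = φ + (star φ ⬝ᵥ ψ) • ψ := by
        conv_lhs => rw [hτeq]
        rw [add_mulVec, vmv_mulVec, vmv_mulVec, hψ]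
        simp
      have h2 : (star φ ⬝ᵥ ψ) • ψ = 0 := by
        have h3 : φ + (star φ ⬝ᵥ ψ) • ψ = φ + 0 := by rw [add_zero]; exact h1.symm
        exact add_left_cancel h3
      by_contra hc
      exact hψ0 (by simpa [smul_eq_zero, hc] using h2)
    have hφ0 : φ ≠ 0 := by
      intro h
      apply hτ0
      rw [hτeq, h]
      ext i j
      simp [vecMulVec_apply]
    obtain ⟨j, hj⟩ := H φ hφ0 hφψ
    refine ⟨j, ?_⟩
    rw [hτeq, key (L j) φ hφψ]
    intro h
    apply hj
    have h2 := congrArg Complex.re h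
    simp [Complex.add_re] at h2
    linarith
end

section
/- Let σ₋ = [[0,0],[1,0]] ∈ M₂(ℂ), let c_1,…,c_m ∈ ℂ be such that Im(conj(c_j)·c_k) ≠ 0 for some pair (j,k), and set L_j = c_j σ₋. Let ψ = (ψ₁, ψ₂) ∈ ℂ² be a unit vector. Then the following are equivalent: (i) for every nonzero φ ∈ ℂ² with ⟨φ, ψ⟩ = 0 there exists j ∈ {1,…,m} with Re⟨φ, L_jψ⟩ ≠ 0; (ii) ψ₁ ≠ 0 (i.e., |ψ⟩⟨ψ| ≠ ρ₀ where ρ₀ = [[0,0],[0,1]]). -/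
open Matrix

/-- Ellipticity of the two-level atom under heterodyne detection: with `L_j = c_j σ₋`
and the `c_j` not all proportional over `ℝ` to a fixed complex number
(`Im(conj(c_j)c_k) ≠ 0` for some pair), the ellipticity criterion (4.5) holds at the
pure state `|ψ⟩⟨ψ|` iff `ψ₁ ≠ 0`, i.e. iff `|ψ⟩⟨ψ|` is not the ground state `ρ₀`. -/
theorem two_level_atom_ellipticity {m : ℕ} (c : Fin m → ℂ)
    (hc : ∃ j k, ((starRingEnd ℂ) (c j) * c k).im ≠ 0)
    (ψ : Fin 2 → ℂ) (hψ : star ψ ⬝ᵥ ψ = 1) :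
    (∀ φ : Fin 2 → ℂ, φ ≠ 0 → star φ ⬝ᵥ ψ = 0 →
        ∃ j, (star φ ⬝ᵥ (c j • (!![0, 0; 1, 0] : Matrix (Fin 2) (Fin 2) ℂ)) *ᵥ ψ).re ≠ 0)
      ↔ ψ 0 ≠ 0 := by
  have key : ∀ (φ : Fin 2 → ℂ) (j : Fin m),
      star φ ⬝ᵥ (c j • (!![0, 0; 1, 0] : Matrix (Fin 2) (Fin 2) ℂ)) *ᵥ ψ
        = (starRingEnd ℂ) (φ 1) * (c j * ψ 0) := by
    intro φ j
    simp [dotProduct, mulVec, Fin.sum_univ_two, Matrix.smul_apply]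
  constructor
  · intro H h0
    obtain ⟨j, hj⟩ := H ![1, 0]
      (by
        intro h
        have := congrFun h 0
        simp at this)
      (by simp [dotProduct, Fin.sum_univ_two, h0])
    apply hj
    rw [key]
    simp
  · intro h1 φ hφ horth
    simp only [dotProduct, Fin.sum_univ_two, Pi.star_apply, RCLike.star_def] at horth
    have hφ1 : φ 1 ≠ 0 := by
      intro h
      rw [h] at horth
      simp at horth
      rcases horth with h' | h'
      · apply hφ
        funext i
        fin_cases i
        · exact h'
        · exact h
      · exact h1 h'
    by_contra hcon
    push_neg at hcon
    set z : ℂ := (starRingEnd ℂ) (φ 1) * ψ 0 with hz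
    have hzne : z ≠ 0 := mul_ne_zero (by simpa using hφ1) h1
    have hre : ∀ j, (z * c j).re = 0 := by
      intro j
      have := hcon j
      rw [key] at this
      rw [show z * c j = (starRingEnd ℂ) (φ 1) * (c j * ψ 0) by rw [hz]; ring]
      exact this
    obtain ⟨j, k, hjk⟩ := hc
    apply hjk
    have e : ((Complex.normSq z : ℝ) : ℂ) * ((starRingEnd ℂ) (c j) * c k)
        = (starRingEnd ℂ) (z * c j) * (z * c k) := by
      rw [Complex.normSq_eq_conj_mul_self]
      simp only [_root_.map_mul]
      ring
    have him : (((Complex.normSq z : ℝ) : ℂ) * ((starRingEnd ℂ) (c j) * c k)).im = 0 := by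
      rw [e, Complex.mul_im, Complex.conj_re, hre j, hre k]
      ring
    have hns : Complex.normSq z ≠ 0 := by simpa [Complex.normSq_eq_zero] using hzne
    simpa [Complex.mul_im, hns] using him
end
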